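/- Kraus branch of the weak order-1 step: Let V be an N × N complex matrix, Δt ∈ (0,1], Ω := √Δt · [[0, −V†], [V, 0]], U := exp(Ω), and for s ∈ {+1, −1} define M_s : ℂ^N → ℂ^N by M_s ψ := (1/√2) [ (U(ψ ⊕ 0))_top + s · (U(ψ ⊕ 0))_bot ], where (·)_top and (·)_bot denote the upper and lower N-blocks of a vector in ℂ^{2N} = ℂ^N ⊕ ℂ^N. Then there exists C > 0 depending only on ‖V‖ such that for all ψ ∈ ℂ^N and both values of s: ‖ √2 · M_s ψ − ( (I − (Δt/2) V† V) ψ + s √Δt · V ψ ) ‖ ≤ C · Δt^{3/2} · ‖ψ‖. That is, up to normalization, the postselected branch reproduces the Euler–Maruyama update with Rademacher increment ξ = s√Δt. -/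

import Mathlib

/-!
Write `Ω = √Δt • A` with `A = [[0, -V†], [V, 0]]` fixed. The Taylor remainder
`exp Ω - (1 + Ω + Ω²/2)` has operator norm at most `‖Ω‖³ e^‖Ω‖ ≤ Δt^{3/2} ‖A‖³ e^‖A‖`.
Applied to `ψ ⊕ 0`, the Taylor polynomial gives exactly `(I - (Δt/2) V†V) ψ ⊕ √Δt Vψ`, and the
X-basis readout `v ↦ v_top + s v_bot`, of norm at most `2`, turns it into the Euler–Maruyama update.
-/

open Matrix

/-- The Euclidean (ℓ²) norm of a finitely-indexed complex vector. -/
noncomputable def euclNorm {ι : Type*} [Fintype ι] (v : ι → ℂ) : ℝ :=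
  ‖(WithLp.equiv 2 (ι → ℂ)).symm v‖

/-- The anti-Hermitian interaction generator `Ω := √Δt · [[0, −V†], [V, 0]]`. -/
noncomputable def interactionGen {N : ℕ} (V : Matrix (Fin N) (Fin N) ℂ) (Δt : ℝ) :
    Matrix (Fin N ⊕ Fin N) (Fin N ⊕ Fin N) ℂ :=
  Matrix.fromBlocks 0 (-((Real.sqrt Δt : ℂ) • Vᴴ)) ((Real.sqrt Δt : ℂ) • V) 0

/-- The Kraus branch `M_s ψ := (1/√2)[(U(ψ⊕0))_top + s·(U(ψ⊕0))_bot]` obtained by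
measuring the interaction ancilla in the `X` basis with outcome `s`. -/
noncomputable def krausBranch {N : ℕ} (V : Matrix (Fin N) (Fin N) ℂ) (Δt : ℝ) (s : ℝ)
    (ψ : Fin N → ℂ) : Fin N → ℂ :=
  fun i =>
    ((Real.sqrt 2 : ℂ))⁻¹ *
      (((NormedSpace.exp (interactionGen V Δt)) *ᵥ Sum.elim ψ 0) (Sum.inl i) +
        (s : ℂ) * ((NormedSpace.exp (interactionGen V Δt)) *ᵥ Sum.elim ψ 0) (Sum.inr i))

open scoped Nat Matrix.Norms.L2Operator

theorem norm_exp_sub_sum_range_le {𝕂 𝔸 : Type*} [RCLike 𝕂] [NormedRing 𝔸] [NormedAlgebra 𝕂 𝔸]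
    [CompleteSpace 𝔸] (x : 𝔸) (k : ℕ) :
    ‖NormedSpace.exp x - ∑ n ∈ Finset.range (k + 1), (n !⁻¹ : 𝕂) • x ^ n‖ ≤
      ‖x‖ ^ (k + 1) * Real.exp ‖x‖ := by
  have htail : Summable fun i ↦ ‖((i + (k + 1))! ⁻¹ : 𝕂) • x ^ (i + (k + 1))‖ :=
    (summable_nat_add_iff (f := fun n ↦ ‖(n !⁻¹ : 𝕂) • x ^ n‖) (k + 1)).2
      (NormedSpace.norm_expSeries_summable' x)
  have hterm (i : ℕ) : ‖((i + (k + 1))! ⁻¹ : 𝕂) • x ^ (i + (k + 1))‖ ≤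
      ‖x‖ ^ (k + 1) * (‖x‖ ^ i / i !) :=
    calc _ = ((i + (k + 1))! : ℝ)⁻¹ * ‖x ^ (i + (k + 1))‖ := by
          rw [norm_smul, norm_inv, RCLike.norm_natCast]
      _ ≤ (i ! : ℝ)⁻¹ * ‖x‖ ^ (i + (k + 1)) := by
          gcongr
          · omega
          · exact norm_pow_le' x (by omega)
      _ = _ := by rw [pow_add]; ring
  rw [congrFun (NormedSpace.exp_eq_tsum 𝕂) x,
    ← (NormedSpace.expSeries_summable' (𝕂 := 𝕂) x).sum_add_tsum_nat_add (k + 1),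
    add_sub_cancel_left, Real.exp_eq_exp_ℝ, NormedSpace.exp_eq_tsum_div, ← tsum_mul_left]
  exact (norm_tsum_le_tsum_norm htail).trans <|
    htail.tsum_le_tsum hterm ((Real.summable_pow_div_factorial ‖x‖).mul_left _)

section XBranch

variable {ι : Type*}

/-- `√2 ⟨s_X|` on the ancilla factor of `ℂ² ⊗ ℂ^ι ≅ ℂ^(ι ⊕ ι)`, where
`|s_X⟩ = (|0⟩ + s|1⟩)/√2`. -/
def xBranch (s : ℂ) : (ι ⊕ ι → ℂ) →ₗ[ℂ] ι → ℂ :=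
  LinearMap.funLeft ℂ ℂ Sum.inl + s • LinearMap.funLeft ℂ ℂ Sum.inr

theorem xBranch_apply (s : ℂ) (v : ι ⊕ ι → ℂ) : xBranch s v = v ∘ Sum.inl + s • v ∘ Sum.inr :=
  rfl

end XBranch

section Euclidean

variable {ι κ : Type*} [Fintype ι] [Fintype κ]

theorem euclNorm_eq_sqrt (v : ι → ℂ) : euclNorm v = √(∑ i, ‖v i‖ ^ 2) :=
  EuclideanSpace.norm_eq _

theorem euclNorm_add_le (u v : ι → ℂ) : euclNorm (u + v) ≤ euclNorm u + euclNorm v :=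
  norm_add_le _ _

theorem euclNorm_smul (c : ℂ) (v : ι → ℂ) : euclNorm (c • v) = ‖c‖ * euclNorm v :=
  norm_smul c _

theorem euclNorm_comp_inl_le (v : ι ⊕ κ → ℂ) : euclNorm (v ∘ Sum.inl) ≤ euclNorm v := by
  simp only [euclNorm_eq_sqrt, Fintype.sum_sum_type, Function.comp_apply]
  gcongr
  exact le_add_of_nonneg_right (by positivity)

theorem euclNorm_comp_inr_le (v : ι ⊕ κ → ℂ) : euclNorm (v ∘ Sum.inr) ≤ euclNorm v := by
  simp only [euclNorm_eq_sqrt, Fintype.sum_sum_type, Function.comp_apply]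
  gcongr
  exact le_add_of_nonneg_left (by positivity)

theorem euclNorm_sum_elim_zero (ψ : ι → ℂ) : euclNorm (Sum.elim ψ (0 : κ → ℂ)) = euclNorm ψ := by
  simp [euclNorm_eq_sqrt, Fintype.sum_sum_type]

theorem euclNorm_mulVec_le [DecidableEq ι] (A : Matrix κ ι ℂ) (v : ι → ℂ) :
    euclNorm (A *ᵥ v) ≤ ‖A‖ * euclNorm v :=
  A.l2_opNorm_mulVec _

theorem euclNorm_xBranch_le (s : ℂ) (v : ι ⊕ ι → ℂ) :
    euclNorm (xBranch s v) ≤ (1 + ‖s‖) * euclNorm v :=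
  calc euclNorm (xBranch s v) ≤ euclNorm (v ∘ Sum.inl) + ‖s‖ * euclNorm (v ∘ Sum.inr) := by
        rw [xBranch_apply, ← euclNorm_smul]
        exact euclNorm_add_le _ _
    _ ≤ euclNorm v + ‖s‖ * euclNorm v := by
        gcongr
        exacts [euclNorm_comp_inl_le v, euclNorm_comp_inr_le v]
    _ = (1 + ‖s‖) * euclNorm v := by ring

end Euclidean

section InteractionGen

variable {N : ℕ} (V : Matrix (Fin N) (Fin N) ℂ) (Δt : ℝ)

theorem interactionGen_eq_smul :
    interactionGen V Δt = (√Δt : ℂ) • fromBlocks 0 (-Vᴴ) V 0 := by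
  simp [interactionGen, fromBlocks_smul]

theorem interactionGen_mulVec_sum_elim (ψ χ : Fin N → ℂ) :
    interactionGen V Δt *ᵥ Sum.elim ψ χ =
      Sum.elim (-((√Δt : ℂ) • Vᴴ *ᵥ χ)) ((√Δt : ℂ) • V *ᵥ ψ) := by
  simp [interactionGen, fromBlocks_mulVec, smul_mulVec, neg_mulVec]

variable {Δt}

theorem taylor_two_interactionGen_mulVec (hΔt : 0 ≤ Δt) (ψ : Fin N → ℂ) :
    (1 + interactionGen V Δt + (2⁻¹ : ℂ) • interactionGen V Δt ^ 2) *ᵥ Sum.elim ψ 0 =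
      Sum.elim ((1 - ((Δt / 2 : ℝ) : ℂ) • (Vᴴ * V)) *ᵥ ψ) ((√Δt : ℂ) • V *ᵥ ψ) := by
  have hsq : (√Δt : ℂ) * √Δt = Δt := by exact_mod_cast Real.mul_self_sqrt hΔt
  rw [add_mulVec, add_mulVec, one_mulVec, smul_mulVec, pow_two, ← mulVec_mulVec,
    interactionGen_mulVec_sum_elim, interactionGen_mulVec_sum_elim]
  ext (i | i)
  · simp only [Pi.add_apply, Pi.smul_apply, Pi.neg_apply, Pi.sub_apply, Pi.zero_apply,
      Sum.elim_inl, mulVec_zero, smul_zero, neg_zero, add_zero, mulVec_smul, smul_smul, hsq,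
      sub_mulVec, one_mulVec, smul_mulVec, ← mulVec_mulVec, Complex.coe_smul, Complex.real_smul,
      Complex.ofReal_mul, Complex.ofReal_div, Complex.ofReal_ofNat, smul_eq_mul, mul_neg]
    ring
  · simp

end InteractionGen

noncomputable def eulerMaruyamaStep {N : ℕ} (V : Matrix (Fin N) (Fin N) ℂ) (Δt s : ℝ)
    (ψ : Fin N → ℂ) : Fin N → ℂ :=
  (1 - ((Δt / 2 : ℝ) : ℂ) • (Vᴴ * V)) *ᵥ ψ + ((s * √Δt : ℝ) : ℂ) • (V *ᵥ ψ)

section KrausBranch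

variable {N : ℕ} (V : Matrix (Fin N) (Fin N) ℂ) {Δt : ℝ}

theorem sqrt_two_smul_krausBranch (s : ℝ) (ψ : Fin N → ℂ) :
    (√2 : ℂ) • krausBranch V Δt s ψ =
      xBranch s (NormedSpace.exp (interactionGen V Δt) *ᵥ Sum.elim ψ 0) := by
  ext i
  simp [krausBranch, xBranch_apply]

theorem sqrt_two_smul_krausBranch_sub_eulerMaruyamaStep (hΔt : 0 ≤ Δt) (s : ℝ) (ψ : Fin N → ℂ) :
    (√2 : ℂ) • krausBranch V Δt s ψ - eulerMaruyamaStep V Δt s ψ =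
      xBranch s ((NormedSpace.exp (interactionGen V Δt) -
        (1 + interactionGen V Δt + (2⁻¹ : ℂ) • interactionGen V Δt ^ 2)) *ᵥ Sum.elim ψ 0) := by
  rw [sub_mulVec, map_sub, ← sqrt_two_smul_krausBranch, taylor_two_interactionGen_mulVec V hΔt,
    xBranch_apply]
  ext i
  simp only [eulerMaruyamaStep, Pi.sub_apply, Pi.add_apply, Pi.smul_apply, smul_eq_mul,
    Complex.real_smul, Complex.coe_smul, Complex.ofReal_mul, Sum.elim_comp_inl, Sum.elim_comp_inr]
  ring

theorem norm_exp_interactionGen_sub_taylor_two_le (hΔt : 0 ≤ Δt) (hΔt1 : Δt ≤ 1) :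
    ‖NormedSpace.exp (interactionGen V Δt) -
        (1 + interactionGen V Δt + (2⁻¹ : ℂ) • interactionGen V Δt ^ 2)‖ ≤
      Δt ^ ((3 : ℝ) / 2) *
        (‖fromBlocks 0 (-Vᴴ) V 0‖ ^ 3 * Real.exp ‖fromBlocks 0 (-Vᴴ) V 0‖) := by
  set K := ‖fromBlocks 0 (-Vᴴ) V 0‖
  have hnorm : ‖interactionGen V Δt‖ = √Δt * K := by
    rw [interactionGen_eq_smul, norm_smul, Complex.norm_real,
      Real.norm_of_nonneg (Real.sqrt_nonneg _)]
  have hpow : Δt ^ ((3 : ℝ) / 2) = √Δt ^ 3 := by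
    rw [Real.rpow_div_two_eq_sqrt 3 hΔt]; norm_cast
  calc _ = ‖NormedSpace.exp (interactionGen V Δt) -
          ∑ n ∈ Finset.range (2 + 1), (n !⁻¹ : ℂ) • interactionGen V Δt ^ n‖ := by
        simp [Finset.sum_range_succ]
    _ ≤ (√Δt * K) ^ 3 * Real.exp (√Δt * K) := hnorm ▸ norm_exp_sub_sum_range_le _ 2
    _ ≤ _ := by
        rw [hpow, mul_pow, mul_assoc]
        gcongr
        exact mul_le_of_le_one_left (norm_nonneg _) (Real.sqrt_le_one.2 hΔt1)

end KrausBranch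

/-- **Kraus branch of the weak order-1 step.** Up to normalization, the
postselected branch `M_s` reproduces the Euler–Maruyama update with Rademacher increment
`ξ = s√Δt`, with one-step error `O(Δt^{3/2})`. -/
theorem kraus_branch_weak1 (N : ℕ) (V : Matrix (Fin N) (Fin N) ℂ) :
    ∃ C > 0, ∀ Δt : ℝ, 0 < Δt → Δt ≤ 1 → ∀ ψ : Fin N → ℂ, ∀ s : ℝ, (s = 1 ∨ s = -1) →
      euclNorm
        ((Real.sqrt 2 : ℂ) • krausBranch V Δt s ψ -
          ((((1 : Matrix (Fin N) (Fin N) ℂ) - ((Δt / 2 : ℝ) : ℂ) • (Vᴴ * V))) *ᵥ ψ +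
            ((s * Real.sqrt Δt : ℝ) : ℂ) • (V *ᵥ ψ))) ≤
        C * Δt ^ ((3 : ℝ) / 2) * euclNorm ψ := by
  set B := ‖fromBlocks 0 (-Vᴴ) V 0‖ ^ 3 * Real.exp ‖fromBlocks 0 (-Vᴴ) V 0‖
  refine ⟨2 * B + 1, by positivity, fun Δt hΔt hΔt1 ψ s hs ↦ ?_⟩
  have hs_norm : ‖(s : ℂ)‖ = 1 := by rcases hs with rfl | rfl <;> simp
  change euclNorm (_ - eulerMaruyamaStep V Δt s ψ) ≤ _
  rw [sqrt_two_smul_krausBranch_sub_eulerMaruyamaStep V hΔt.le]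
  set Ω := interactionGen V Δt
  have hR := norm_exp_interactionGen_sub_taylor_two_le V hΔt.le hΔt1
  set R := NormedSpace.exp Ω - (1 + Ω + (2⁻¹ : ℂ) • Ω ^ 2)
  have hψ : 0 ≤ euclNorm ψ := norm_nonneg _
  calc _ ≤ (1 + ‖(s : ℂ)‖) * euclNorm (R *ᵥ Sum.elim ψ 0) := euclNorm_xBranch_le _ _
    _ ≤ 2 * (‖R‖ * euclNorm ψ) := by
        rw [hs_norm, one_add_one_eq_two, ← euclNorm_sum_elim_zero ψ (κ := Fin N)]
        gcongr
        exact euclNorm_mulVec_le R _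
    _ ≤ 2 * (Δt ^ ((3 : ℝ) / 2) * B * euclNorm ψ) := by gcongr
    _ ≤ (2 * B + 1) * Δt ^ ((3 : ℝ) / 2) * euclNorm ψ := by
        have := Real.rpow_nonneg hΔt.le ((3 : ℝ) / 2)
        nlinarith [mul_nonneg this hψ]
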